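/- Let μ be a probability measure on ℝ^d and define the kernel K : ℝ^d → ℝ by K(u) = ∫_{ℝ^d} cos(⟨ω, u⟩) dμ(ω). Then for all x, x' ∈ ℝ^d, the expectation of the product of random features z_ω(x)·z_ω(x') = 2·cos(⟨ω, x⟩ + b)·cos(⟨ω, x'⟩ + b), taken over ω ~ μ and b ~ Uniform[0, 2π] independent, equals K(x − x'); that is, ∫_{ℝ^d} (1/(2π)) ∫_{0}^{2π} 2·cos(⟨ω, x⟩ + b)·cos(⟨ω, x'⟩ + b) db dμ(ω) = K(x − x'). -/

import Mathlib

open Real MeasureTheory intervalIntegral RealInnerProductSpace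

/-! By the product-to-sum formula, `2 cos (a + b) cos (c + b) = cos (a - c) + cos (2b + a + c)`.
The second term has mean zero over a period of `b`, so the average over `b` is
`cos (⟪ω, x⟫ - ⟪ω, x'⟫) = cos ⟪ω, x - x'⟫` for every `ω`, and integrating in `ω` gives `K (x - x')`. -/

theorem integral_cos_int_mul_add_eq_zero {n : ℤ} (hn : n ≠ 0) (c : ℝ) :
    ∫ b in (0 : ℝ)..2 * π, cos (n * b + c) = 0 := by
  rw [integral_comp_mul_add cos (Int.cast_ne_zero.mpr hn), integral_cos, mul_zero, zero_add,
    add_comm, sin_add_int_mul_two_pi, sub_self, smul_zero]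

theorem average_two_mul_cos_add_mul_cos_add (a c : ℝ) :
    (1 / (2 * π)) * ∫ b in (0 : ℝ)..2 * π, 2 * cos (a + b) * cos (c + b) = cos (a - c) := by
  have h_prod_to_sum :
      ∀ b, 2 * cos (a + b) * cos (c + b) = cos (a - c) + cos ((2 : ℤ) * b + (a + c)) := by
    intro b
    rw [two_mul_cos_mul_cos]
    congr 2 <;> push_cast <;> ring
  simp_rw [h_prod_to_sum]
  rw [intervalIntegral.integral_add intervalIntegrable_const
      ((by fun_prop : Continuous fun b : ℝ => cos ((2 : ℤ) * b + (a + c))).intervalIntegrable _ _),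
    integral_cos_int_mul_add_eq_zero two_ne_zero, intervalIntegral.integral_const,
    smul_eq_mul, add_zero, sub_zero]
  field_simp

theorem random_feature_kernel_expectation_general
    (d : ℕ) (μ : Measure (EuclideanSpace ℝ (Fin d)))
    (K : EuclideanSpace ℝ (Fin d) → ℝ)
    (hK : ∀ u, K u = ∫ ω, Real.cos ⟪ω, u⟫ ∂μ) :
    ∀ x x' : EuclideanSpace ℝ (Fin d),
      (∫ ω, ((1 / (2 * Real.pi)) * ∫ b in (0 : ℝ)..(2 * Real.pi),
        2 * Real.cos (⟪ω, x⟫ + b) * Real.cos (⟪ω, x'⟫ + b)) ∂μ) = K (x - x') := by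
  intro x x'
  simp_rw [hK, inner_sub_right, average_two_mul_cos_add_mul_cos_add]

/-- For a spectral probability measure `μ` on `ℝ^d` and the kernel
`K u = ∫ ω, cos ⟪ω, u⟫ ∂μ`, the expectation of the product of random features
`2 * cos (⟪ω, x⟫ + b) * cos (⟪ω, x'⟫ + b)` over `ω ~ μ` and `b ~ Uniform[0, 2π]`
equals `K (x - x')`. -/
theorem random_feature_kernel_expectation
    (d : ℕ) (μ : Measure (EuclideanSpace ℝ (Fin d))) [IsProbabilityMeasure μ]
    (K : EuclideanSpace ℝ (Fin d) → ℝ)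
    (hK : ∀ u, K u = ∫ ω, Real.cos ⟪ω, u⟫ ∂μ) :
    ∀ x x' : EuclideanSpace ℝ (Fin d),
      (∫ ω, ((1 / (2 * Real.pi)) * ∫ b in (0 : ℝ)..(2 * Real.pi),
        2 * Real.cos (⟪ω, x⟫ + b) * Real.cos (⟪ω, x'⟫ + b)) ∂μ) = K (x - x') :=
  random_feature_kernel_expectation_general d μ K hK
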